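/- arXiv:2407.08560 — 3 statements merged into one kernel-verified Lean document; each statement's English description precedes it below -/
import Mathlib

section
/- Under the stated causal mediation setup, the counterfactual mean at treatment level t and mediator level m admits the doubly robust representation E[Y(t,m)] = E[ μ_{t,m}⁰(S₁) + 1{T=t}·(ν_{t,m}⁰(S̄₂) − μ_{t,m}⁰(S₁))/π_t⁰(S₁) + 1{T=t}·1{M=m}·(Y − ν_{t,m}⁰(S̄₂))/(π_t⁰(S₁)·ρ_{t,m}⁰(S̄₂)) ]. -/
/-!
Write `1_t = 1{T = t}` and `1_m = 1{M = m}`. The propensity identities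
`E[1_t h(S₁)] = E[π h(S₁)]` and `E[1_t 1_m h(S̄₂)] = E[1_t ρ h(S̄₂)]`, stated for bounded `h`,
extend by truncation to `h` that are only almost surely bounded; applied to `h = μ/π` and
`h = ν/(πρ)` (bounded thanks to positivity) they show that both augmentation terms of the score
have mean zero. What remains is the inverse-propensity-weighted mean `E[1_t 1_m Y(t,m)/(πρ)]`.

This equals `E[Y(t,m)]` by conditioning twice. Under `P(· | T = t)` the variables `1_m` and
`Y(t,m)` are conditionally independent given `S̄₂`, so `E[1_m Y(t,m) | S̄₂] = ρ E[Y(t,m) | S̄₂]` and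
the factor `ρ` cancels; likewise `E[1_t Y(t,m) | S₁] = π E[Y(t,m) | S₁]` cancels `π`. The product
rule for conditionally independent variables holds because they are independent under almost
every measure of the conditional expectation kernel.
-/

open MeasureTheory ProbabilityTheory

theorem abs_div_le_div_of_abs_le {a b A c : ℝ} (hc : 0 < c) (ha : |a| ≤ A) (hb : c ≤ b) :
    |a / b| ≤ A / c := by
  rw [abs_div, abs_of_pos (hc.trans_le hb)]
  exact div_le_div₀ ((abs_nonneg _).trans ha) ha hc hb

theorem doubly_robust_score_eq {iT iM y y' a b π ρ : ℝ} (hπ : π ≠ 0) (hρ : ρ ≠ 0)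
    (hcons : iT * iM * y = iT * iM * y') :
    a + iT * (b - a) / π + iT * iM * (y - b) / (π * ρ)
      = iT * iM * y' / (π * ρ) + (π - iT) * (a / π) + (iT * ρ - iT * iM) * (b / (π * ρ)) := by
  field_simp
  linear_combination hcons

theorem MeasureTheory.integral_mul_condExp_of_bound {Ω : Type*} {m mΩ : MeasurableSpace Ω}
    {μ : Measure Ω} [IsFiniteMeasure μ] (hm : m ≤ mΩ) {Z f : Ω → ℝ}
    (hZ : StronglyMeasurable[m] Z) {c : ℝ} (hZc : ∀ᵐ ω ∂μ, |Z ω| ≤ c) (hf : Integrable f μ) :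
    ∫ ω, Z ω * (μ[f | m]) ω ∂μ = ∫ ω, Z ω * f ω ∂μ :=
  calc ∫ ω, Z ω * (μ[f | m]) ω ∂μ = ∫ ω, (μ[Z * f | m]) ω ∂μ :=
        (integral_congr_ae (condExp_stronglyMeasurable_mul_of_bound hm hZ hf c hZc)).symm
    _ = ∫ ω, Z ω * f ω ∂μ := integral_condExp hm

theorem ProbabilityTheory.CondIndepFun.condExp_mul_ae_eq {Ω : Type*} {m' mΩ : MeasurableSpace Ω}
    [StandardBorelSpace Ω] {hm' : m' ≤ mΩ} {μ : Measure Ω} [IsFiniteMeasure μ] {f g : Ω → ℝ}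
    (h : CondIndepFun m' hm' f g μ) (hf : Measurable f) (hg : Measurable g)
    (hfi : Integrable f μ) (hgi : Integrable g μ) (hfgi : Integrable (f * g) μ) :
    μ[f * g | m'] =ᵐ[μ] μ[f | m'] * μ[g | m'] := by
  -- conditional independence is independence under almost every measure `condExpKernel μ m' ω`
  have hker := ae_of_ae_trim hm' ((condIndepFun_iff_map_prod_eq_prod_map_map hf hg).1 h)
  filter_upwards [hker, condExp_ae_eq_integral_condExpKernel hm' hfgi,
    condExp_ae_eq_integral_condExpKernel hm' hfi,
    condExp_ae_eq_integral_condExpKernel hm' hgi] with ω hω hfg hf' hg'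
  rw [hfg, Pi.mul_apply, hf', hg']
  have hind : IndepFun f g (condExpKernel μ m' ω) := by
    rw [indepFun_iff_map_prod_eq_prod_map_map hf.aemeasurable hg.aemeasurable]
    simpa [Kernel.map_apply _ (hf.prodMk hg), Kernel.prod_apply, Kernel.map_apply _ hf,
      Kernel.map_apply _ hg] using hω
  exact hind.integral_mul_eq_mul_integral hf.aestronglyMeasurable hg.aestronglyMeasurable

theorem ProbabilityTheory.CondIndepFun.integral_mul_mul_eq_integral_condExp_mul_mul
    {Ω : Type*} {m' mΩ : MeasurableSpace Ω} [StandardBorelSpace Ω] {hm' : m' ≤ mΩ}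
    {μ : Measure Ω} [IsFiniteMeasure μ] {g e : Ω → ℝ} (hind : CondIndepFun m' hm' g e μ)
    (hg : Measurable g) (hgi : Integrable g μ) (he : Measurable e) {R : ℝ}
    (heR : ∀ᵐ ω ∂μ, |e ω| ≤ R) {Z : Ω → ℝ} (hZ : StronglyMeasurable[m'] Z) {c : ℝ}
    (hZc : ∀ᵐ ω ∂μ, |Z ω| ≤ c) :
    ∫ ω, e ω * g ω * Z ω ∂μ = ∫ ω, (μ[e | m']) ω * g ω * Z ω ∂μ := by
  have hei : Integrable e μ := .of_bound he.aestronglyMeasurable R (by simpa using heR)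
  have hgei : Integrable (g * e) μ := hgi.mul_bdd he.aestronglyMeasurable (by simpa using heR)
  have hZe : ∀ᵐ ω ∂μ, |Z ω * (μ[e | m']) ω| ≤ c * R := by
    filter_upwards [hZc, ae_bdd_abs_condExp_of_ae_bdd_abs (m := m') heR] with ω h1 h2
    rw [abs_mul]
    exact mul_le_mul h1 h2 (abs_nonneg _) ((abs_nonneg _).trans h1)
  calc ∫ ω, e ω * g ω * Z ω ∂μ = ∫ ω, Z ω * (g * e) ω ∂μ := by
        congr 1 with ω; simp only [Pi.mul_apply]; ring
    _ = ∫ ω, Z ω * (μ[g | m'] * μ[e | m']) ω ∂μ := by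
        rw [← integral_mul_condExp_of_bound hm' hZ hZc hgei]
        refine integral_congr_ae ?_
        filter_upwards [hind.condExp_mul_ae_eq hg he hgi hei hgei] with ω hω
        rw [hω]
    _ = ∫ ω, (Z ω * (μ[e | m']) ω) * (μ[g | m']) ω ∂μ := by
        congr 1 with ω; simp only [Pi.mul_apply]; ring
    _ = ∫ ω, (Z ω * (μ[e | m']) ω) * g ω ∂μ :=
        integral_mul_condExp_of_bound hm' (hZ.mul stronglyMeasurable_condExp) hZe hgi
    _ = ∫ ω, (μ[e | m']) ω * g ω * Z ω ∂μ := by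
        congr 1 with ω; ring

section

variable {Ω E : Type*} {mΩ : MeasurableSpace Ω} [MeasurableSpace E] {μ : Measure Ω}

theorem MeasureTheory.condExp_comap_ae_eq_of_forall_integral_mul [IsFiniteMeasure μ]
    {X : Ω → E} (hX : Measurable X) {F : Ω → ℝ} (hF : Integrable F μ) {p : E → ℝ}
    (hp : Measurable p) (hpi : Integrable (fun ω => p (X ω)) μ)
    (hmom : ∀ h : E → ℝ, Measurable h → (∃ C, ∀ x, |h x| ≤ C) →
      ∫ ω, F ω * h (X ω) ∂μ = ∫ ω, p (X ω) * h (X ω) ∂μ) :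
    μ[F | MeasurableSpace.comap X inferInstance] =ᵐ[μ] fun ω => p (X ω) := by
  refine (ae_eq_condExp_of_forall_setIntegral_eq hX.comap_le hF (fun s _ _ => hpi.integrableOn)
    ?_ (hp.comp (comap_measurable X)).aestronglyMeasurable).symm
  rintro _ ⟨B, hB, rfl⟩ -
  have hind : ∀ G : Ω → ℝ, ∫ ω in X ⁻¹' B, G ω ∂μ = ∫ ω, G ω * B.indicator 1 (X ω) ∂μ := by
    intro G
    rw [← integral_indicator (hX hB)]
    congr 1 with ω
    by_cases hω : X ω ∈ B <;> simp [hω]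
  rw [hind, hind]
  exact (hmom _ (measurable_one.indicator hB)
    ⟨1, fun x => by by_cases hx : x ∈ B <;> simp [hx]⟩).symm

theorem MeasureTheory.integral_mul_comp_eq_of_ae_bound {X : Ω → E} {F G : Ω → ℝ}
    (hmom : ∀ h : E → ℝ, Measurable h → (∃ C, ∀ x, |h x| ≤ C) →
      ∫ ω, F ω * h (X ω) ∂μ = ∫ ω, G ω * h (X ω) ∂μ)
    {h : E → ℝ} (hh : Measurable h) {C : ℝ} (hC : ∀ᵐ ω ∂μ, |h (X ω)| ≤ C) :
    ∫ ω, F ω * h (X ω) ∂μ = ∫ ω, G ω * h (X ω) ∂μ := by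
  let h' : E → ℝ := fun x => if |h x| ≤ C then h x else 0
  have hh' : Measurable h' :=
    Measurable.ite (measurableSet_le hh.abs measurable_const) hh measurable_const
  have hbdd : ∀ x, |h' x| ≤ |C| := fun x => by
    by_cases hx : |h x| ≤ C
    · simpa [h', hx] using hx.trans (le_abs_self C)
    · simp [h', hx]
  have heq : ∀ H : Ω → ℝ, ∫ ω, H ω * h (X ω) ∂μ = ∫ ω, H ω * h' (X ω) ∂μ := fun H =>
    integral_congr_ae (hC.mono fun ω hω => by simp [h', hω])
  rw [heq F, heq G, hmom h' hh' ⟨|C|, hbdd⟩]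

theorem MeasureTheory.integral_sub_mul_comp_eq_zero {X : Ω → E} (hX : AEMeasurable X μ)
    {F G : Ω → ℝ} (hF : Integrable F μ) (hG : Integrable G μ)
    (hmom : ∀ h : E → ℝ, Measurable h → (∃ C, ∀ x, |h x| ≤ C) →
      ∫ ω, F ω * h (X ω) ∂μ = ∫ ω, G ω * h (X ω) ∂μ)
    {h : E → ℝ} (hh : Measurable h) {C : ℝ} (hC : ∀ᵐ ω ∂μ, |h (X ω)| ≤ C) :
    ∫ ω, (G ω - F ω) * h (X ω) ∂μ = 0 := by
  have hhX : AEStronglyMeasurable (fun ω => h (X ω)) μ :=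
    (hh.comp_aemeasurable hX).aestronglyMeasurable
  simp only [sub_mul]
  rw [integral_sub (hG.mul_bdd hhX (by simpa using hC)) (hF.mul_bdd hhX (by simpa using hC)),
    integral_mul_comp_eq_of_ae_bound hmom hh hC, sub_self]

theorem MeasureTheory.integral_add_sub_mul_comp_eq {X : Ω → E} (hX : AEMeasurable X μ)
    {F G : Ω → ℝ} (hF : Integrable F μ) (hG : Integrable G μ)
    (hmom : ∀ h : E → ℝ, Measurable h → (∃ C, ∀ x, |h x| ≤ C) →
      ∫ ω, F ω * h (X ω) ∂μ = ∫ ω, G ω * h (X ω) ∂μ)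
    {h : E → ℝ} (hh : Measurable h) {C : ℝ} (hC : ∀ᵐ ω ∂μ, |h (X ω)| ≤ C) (A : Ω → ℝ) :
    ∫ ω, (A ω + (G ω - F ω) * h (X ω)) ∂μ = ∫ ω, A ω ∂μ := by
  have hD : Integrable (fun ω => (G ω - F ω) * h (X ω)) μ :=
    (hG.sub hF).mul_bdd (hh.comp_aemeasurable hX).aestronglyMeasurable (by simpa using hC)
  by_cases hA : Integrable A μ
  · rw [integral_add hA hD, integral_sub_mul_comp_eq_zero hX hF hG hmom hh hC, add_zero]
  · -- both integrals are the junk value `0`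
    have hAD : ¬Integrable (fun ω => A ω + (G ω - F ω) * h (X ω)) μ := fun hAD =>
      hA ((hAD.sub hD).congr (ae_of_all _ fun ω => by simp))
    rw [integral_undef hA, integral_undef hAD]

theorem ProbabilityTheory.integral_ite_mul_eq_measureReal_mul_integral_cond [IsFiniteMeasure μ]
    {p : Ω → Prop} [DecidablePred p] (hp : MeasurableSet {ω | p ω}) (F : Ω → ℝ) :
    ∫ ω, (if p ω then 1 else 0) * F ω ∂μ = μ.real {ω | p ω} * ∫ ω, F ω ∂μ[|{ω | p ω}] := by
  have hind : ∫ ω, (if p ω then 1 else 0) * F ω ∂μ = ∫ ω in {ω | p ω}, F ω ∂μ := by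
    rw [← integral_indicator hp]
    congr 1 with ω
    by_cases hω : p ω <;> simp [hω]
  rw [hind, cond, integral_smul_measure, ENNReal.toReal_inv, smul_eq_mul, ← mul_assoc]
  rcases eq_or_ne (μ {ω | p ω}) 0 with h0 | h0
  · simp [Measure.restrict_eq_zero.2 h0]
  · rw [measureReal_def, mul_inv_cancel₀ (ENNReal.toReal_ne_zero.2 ⟨h0, measure_ne_top _ _⟩),
      one_mul]

theorem ProbabilityTheory.integral_cond_eq_of_integral_ite_mul_eq [IsFiniteMeasure μ]
    {p : Ω → Prop} [DecidablePred p] (hp : MeasurableSet {ω | p ω}) {F G : Ω → ℝ}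
    (h : ∫ ω, (if p ω then 1 else 0) * F ω ∂μ = ∫ ω, (if p ω then 1 else 0) * G ω ∂μ) :
    ∫ ω, F ω ∂μ[|{ω | p ω}] = ∫ ω, G ω ∂μ[|{ω | p ω}] := by
  rcases eq_or_ne (μ {ω | p ω}) 0 with h0 | h0
  · simp [cond_eq_zero_of_meas_eq_zero h0]
  · rw [integral_ite_mul_eq_measureReal_mul_integral_cond hp,
      integral_ite_mul_eq_measureReal_mul_integral_cond hp] at h
    exact mul_left_cancel₀ ((measureReal_ne_zero_iff (measure_ne_top _ _)).2 h0) h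

theorem ProbabilityTheory.CondIndepFun.integral_mul_mul_div_comp [StandardBorelSpace Ω]
    [IsFiniteMeasure μ] {X : Ω → E} (hX : Measurable X) {g e : Ω → ℝ}
    (hind : CondIndepFun (MeasurableSpace.comap X inferInstance) hX.comap_le g e μ)
    (hg : Measurable g) (hgi : Integrable g μ) (he : Measurable e) {R : ℝ}
    (heR : ∀ ω, |e ω| ≤ R) {p : E → ℝ} (hp : Measurable p)
    (hpi : Integrable (fun ω => p (X ω)) μ)
    (hmom : ∀ h : E → ℝ, Measurable h → (∃ C, ∀ x, |h x| ≤ C) →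
      ∫ ω, e ω * h (X ω) ∂μ = ∫ ω, p (X ω) * h (X ω) ∂μ)
    {c : ℝ} (hc : 0 < c) (hpc : ∀ᵐ ω ∂μ, c ≤ p (X ω)) {k : E → ℝ} (hk : Measurable k) {C : ℝ}
    (hkC : ∀ᵐ ω ∂μ, |k (X ω)| ≤ C) :
    ∫ ω, e ω * g ω * (k (X ω) / p (X ω)) ∂μ = ∫ ω, g ω * k (X ω) ∂μ := by
  have hei : Integrable e μ :=
    .of_bound he.aestronglyMeasurable R (ae_of_all _ (by simpa using heR))
  have hce := condExp_comap_ae_eq_of_forall_integral_mul hX hei hp hpi hmom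
  have hZ : StronglyMeasurable[MeasurableSpace.comap X inferInstance]
      (fun ω => k (X ω) / p (X ω)) := ((hk.div hp).comp (comap_measurable X)).stronglyMeasurable
  have hZC : ∀ᵐ ω ∂μ, |k (X ω) / p (X ω)| ≤ C / c := by
    filter_upwards [hkC, hpc] with ω h1 h2
    exact abs_div_le_div_of_abs_le hc h1 h2
  rw [hind.integral_mul_mul_eq_integral_condExp_mul_mul hg hgi he (ae_of_all _ heR) hZ hZC]
  refine integral_congr_ae ?_
  filter_upwards [hce, hpc] with ω h1 h2
  rw [h1]
  field_simp [(hc.trans_le h2).ne']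

theorem ProbabilityTheory.CondIndepFun.integral_ite_mul_mul_div_comp {α : Type*}
    [StandardBorelSpace Ω] [MeasurableSpace α] [MeasurableSingletonClass α] [DecidableEq α]
    [IsFiniteMeasure μ] {X : Ω → E} (hX : Measurable X) {Y : Ω → ℝ} {W : Ω → α}
    (hind : CondIndepFun (MeasurableSpace.comap X inferInstance) hX.comap_le Y W μ)
    (hY : Measurable Y) (hYi : Integrable Y μ) (hW : Measurable W) (w : α) {p : E → ℝ}
    (hp : Measurable p) (hpb : ∃ C, ∀ x, |p x| ≤ C)
    (hmom : ∀ h : E → ℝ, Measurable h → (∃ C, ∀ x, |h x| ≤ C) →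
      ∫ ω, (if W ω = w then (1 : ℝ) else 0) * h (X ω) ∂μ = ∫ ω, p (X ω) * h (X ω) ∂μ)
    {c : ℝ} (hc : 0 < c) (hpc : ∀ᵐ ω ∂μ, c ≤ p (X ω)) {k : E → ℝ} (hk : Measurable k) {C : ℝ}
    (hkC : ∀ᵐ ω ∂μ, |k (X ω)| ≤ C) :
    ∫ ω, (if W ω = w then (1 : ℝ) else 0) * Y ω * (k (X ω) / p (X ω)) ∂μ
      = ∫ ω, Y ω * k (X ω) ∂μ := by
  obtain ⟨Cp, hCp⟩ := hpb
  have hind' : CondIndepFun _ hX.comap_le Y (fun ω => if W ω = w then (1 : ℝ) else 0) μ :=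
    hind.comp (ψ := fun x => if x = w then (1 : ℝ) else 0) measurable_id
      (measurable_const.ite (measurableSet_singleton w) measurable_const)
  refine hind'.integral_mul_mul_div_comp hX hY hYi
    (measurable_const.ite (hW (measurableSet_singleton w)) measurable_const) (R := 1)
    (fun ω => ?_) hp
    (.of_bound (hp.comp hX).aestronglyMeasurable Cp (ae_of_all _ fun ω => by simpa using hCp _))
    hmom hc hpc hk hkC
  split_ifs <;> simp

end

theorem integral_inverse_propensity_weighted_eq {Ω E₁ E₂ α β : Type*} {mΩ : MeasurableSpace Ω}
    [StandardBorelSpace Ω] [MeasurableSpace E₁] [MeasurableSpace E₂] [MeasurableSpace α]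
    [MeasurableSingletonClass α] [DecidableEq α] [MeasurableSpace β] [MeasurableSingletonClass β]
    [DecidableEq β] {P : Measure Ω} [IsFiniteMeasure P]
    {S₁ : Ω → E₁} {S₂ : Ω → E₂} (hS₁ : Measurable S₁) (hS₂ : Measurable S₂)
    {T : Ω → α} (hT : Measurable T) {M : Ω → β} (hM : Measurable M) (t : α) (m : β)
    {Y : Ω → ℝ} (hY : Measurable Y) {C : ℝ} (hYC : ∀ ω, |Y ω| ≤ C)
    {π : E₁ → ℝ} (hπ : Measurable π) (hπb : ∃ C, ∀ x, |π x| ≤ C)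
    {ρ : E₁ × E₂ → ℝ} (hρ : Measurable ρ) (hρb : ∃ C, ∀ x, |ρ x| ≤ C)
    (hπmom : ∀ h : E₁ → ℝ, Measurable h → (∃ C, ∀ x, |h x| ≤ C) →
      ∫ ω, (if T ω = t then (1 : ℝ) else 0) * h (S₁ ω) ∂P = ∫ ω, π (S₁ ω) * h (S₁ ω) ∂P)
    (hρmom : ∀ h : E₁ × E₂ → ℝ, Measurable h → (∃ C, ∀ x, |h x| ≤ C) →
      ∫ ω, (if T ω = t then (1 : ℝ) else 0) * (if M ω = m then (1 : ℝ) else 0)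
          * h (S₁ ω, S₂ ω) ∂P
        = ∫ ω, (if T ω = t then (1 : ℝ) else 0) * ρ (S₁ ω, S₂ ω) * h (S₁ ω, S₂ ω) ∂P)
    {c : ℝ} (hc : 0 < c) (hπc : ∀ᵐ ω ∂P, c ≤ π (S₁ ω)) (hρc : ∀ᵐ ω ∂P, c ≤ ρ (S₁ ω, S₂ ω))
    (hind₁ : CondIndepFun (MeasurableSpace.comap S₁ inferInstance) hS₁.comap_le Y T P)
    (hind₂ : CondIndepFun (MeasurableSpace.comap (fun ω => (S₁ ω, S₂ ω)) inferInstance)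
      (hS₁.prodMk hS₂).comap_le Y M (P[|{ω | T ω = t}])) :
    ∫ ω, (if T ω = t then (1 : ℝ) else 0) * (if M ω = m then (1 : ℝ) else 0) * Y ω
        / (π (S₁ ω) * ρ (S₁ ω, S₂ ω)) ∂P = ∫ ω, Y ω ∂P := by
  set Q := P[|{ω | T ω = t}]
  have hA : MeasurableSet {ω | T ω = t} := hT (measurableSet_singleton t)
  have hQP : ∀ {q : Ω → Prop}, (∀ᵐ ω ∂P, q ω) → ∀ᵐ ω ∂Q, q ω :=
    fun h => cond_absolutelyContinuous.ae_le h
  have hYi : ∀ ν : Measure Ω, [IsFiniteMeasure ν] → Integrable Y ν :=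
    fun ν _ => .of_bound hY.aestronglyMeasurable C (ae_of_all _ (by simpa using hYC))
  have hweight₁ : ∫ ω, (if T ω = t then (1 : ℝ) else 0) * Y ω * (1 / π (S₁ ω)) ∂P
      = ∫ ω, Y ω * 1 ∂P :=
    hind₁.integral_ite_mul_mul_div_comp hS₁ hY (hYi P) hT t hπ hπb hπmom hc hπc measurable_const
      (ae_of_all _ fun _ => le_rfl)
  have hweight₂ : ∫ ω, (if M ω = m then (1 : ℝ) else 0) * Y ω * (1 / π (S₁ ω) / ρ (S₁ ω, S₂ ω)) ∂Q
      = ∫ ω, Y ω * (1 / π (S₁ ω)) ∂Q := by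
    refine hind₂.integral_ite_mul_mul_div_comp (hS₁.prodMk hS₂) hY (hYi Q) hM m hρ hρb
      (fun h hh hhb => integral_cond_eq_of_integral_ite_mul_eq hA ?_) hc (hQP hρc)
      (k := fun x => 1 / π x.1) (measurable_const.div (hπ.comp measurable_fst))
      (hQP (hπc.mono fun ω hω => abs_div_le_div_of_abs_le hc abs_one.le hω))
    simpa only [mul_assoc] using hρmom h hh hhb
  calc ∫ ω, (if T ω = t then (1 : ℝ) else 0) * (if M ω = m then (1 : ℝ) else 0) * Y ω
        / (π (S₁ ω) * ρ (S₁ ω, S₂ ω)) ∂P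
      = ∫ ω, (if T ω = t then (1 : ℝ) else 0) * ((if M ω = m then (1 : ℝ) else 0) * Y ω
          * (1 / π (S₁ ω) / ρ (S₁ ω, S₂ ω))) ∂P := by
        congr 1 with ω; field_simp
    _ = ∫ ω, (if T ω = t then (1 : ℝ) else 0) * (Y ω * (1 / π (S₁ ω))) ∂P := by
        rw [integral_ite_mul_eq_measureReal_mul_integral_cond hA,
          integral_ite_mul_eq_measureReal_mul_integral_cond hA, hweight₂]
    _ = ∫ ω, Y ω ∂P := by
        rw [← mul_one (∫ ω, Y ω ∂P), ← integral_mul_const, ← hweight₁]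
        congr 1 with ω; field_simp

theorem integral_doubly_robust_score_eq {Ω E₁ E₂ α β : Type*} {mΩ : MeasurableSpace Ω}
    [MeasurableSpace E₁] [MeasurableSpace E₂] [MeasurableSpace α] [MeasurableSingletonClass α]
    [DecidableEq α] [MeasurableSpace β] [MeasurableSingletonClass β] [DecidableEq β]
    {P : Measure Ω} [IsFiniteMeasure P]
    {S₁ : Ω → E₁} {S₂ : Ω → E₂} (hS₁ : Measurable S₁) (hS₂ : Measurable S₂)
    {T : Ω → α} (hT : Measurable T) {M : Ω → β} (hM : Measurable M) (t : α) (m : β)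
    {Y Y' : Ω → ℝ}
    (hcons : ∀ ω, (if T ω = t then (1 : ℝ) else 0) * (if M ω = m then (1 : ℝ) else 0) * Y ω
      = (if T ω = t then (1 : ℝ) else 0) * (if M ω = m then (1 : ℝ) else 0) * Y' ω)
    {π μ : E₁ → ℝ} {ρ ν : E₁ × E₂ → ℝ} (hπ : Measurable π) (hρ : Measurable ρ)
    (hν : Measurable ν) (hμ : Measurable μ) (hπb : ∃ C, ∀ x, |π x| ≤ C)
    (hρb : ∃ C, ∀ x, |ρ x| ≤ C) (hνb : ∃ C, ∀ x, |ν x| ≤ C) (hμb : ∃ C, ∀ x, |μ x| ≤ C)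
    (hπmom : ∀ h : E₁ → ℝ, Measurable h → (∃ C, ∀ x, |h x| ≤ C) →
      ∫ ω, (if T ω = t then (1 : ℝ) else 0) * h (S₁ ω) ∂P = ∫ ω, π (S₁ ω) * h (S₁ ω) ∂P)
    (hρmom : ∀ h : E₁ × E₂ → ℝ, Measurable h → (∃ C, ∀ x, |h x| ≤ C) →
      ∫ ω, (if T ω = t then (1 : ℝ) else 0) * (if M ω = m then (1 : ℝ) else 0)
          * h (S₁ ω, S₂ ω) ∂P
        = ∫ ω, (if T ω = t then (1 : ℝ) else 0) * ρ (S₁ ω, S₂ ω) * h (S₁ ω, S₂ ω) ∂P)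
    {c : ℝ} (hc : 0 < c) (hπc : ∀ᵐ ω ∂P, c ≤ π (S₁ ω)) (hρc : ∀ᵐ ω ∂P, c ≤ ρ (S₁ ω, S₂ ω)) :
    ∫ ω, (μ (S₁ ω)
        + (if T ω = t then (1 : ℝ) else 0) * (ν (S₁ ω, S₂ ω) - μ (S₁ ω)) / π (S₁ ω)
        + (if T ω = t then (1 : ℝ) else 0) * (if M ω = m then (1 : ℝ) else 0)
          * (Y ω - ν (S₁ ω, S₂ ω)) / (π (S₁ ω) * ρ (S₁ ω, S₂ ω))) ∂P
      = ∫ ω, (if T ω = t then (1 : ℝ) else 0) * (if M ω = m then (1 : ℝ) else 0) * Y' ω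
          / (π (S₁ ω) * ρ (S₁ ω, S₂ ω)) ∂P := by
  obtain ⟨Cπ, hCπ⟩ := hπb
  obtain ⟨Cρ, hCρ⟩ := hρb
  obtain ⟨Cν, hCν⟩ := hνb
  obtain ⟨Cμ, hCμ⟩ := hμb
  have hS : Measurable fun ω => (S₁ ω, S₂ ω) := hS₁.prodMk hS₂
  have hπρc : ∀ᵐ ω ∂P, c * c ≤ π (S₁ ω) * ρ (S₁ ω, S₂ ω) := by
    filter_upwards [hπc, hρc] with ω h₁ h₂
    exact mul_le_mul h₁ h₂ hc.le (hc.le.trans h₁)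
  have hiT : Measurable fun ω => if T ω = t then (1 : ℝ) else 0 :=
    measurable_const.ite (hT (measurableSet_singleton t)) measurable_const
  have hiM : Measurable fun ω => if M ω = m then (1 : ℝ) else 0 :=
    measurable_const.ite (hM (measurableSet_singleton m)) measurable_const
  have hiT₁ : ∀ ω, |if T ω = t then (1 : ℝ) else 0| ≤ 1 := fun ω => by split_ifs <;> simp
  have hiTρ : ∀ ω, |(if T ω = t then (1 : ℝ) else 0) * ρ (S₁ ω, S₂ ω)| ≤ Cρ := fun ω => by
    split_ifs <;> simp [hCρ, (abs_nonneg _).trans (hCρ (S₁ ω, S₂ ω))]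
  have hiTM₁ : ∀ ω, |(if T ω = t then (1 : ℝ) else 0) * (if M ω = m then (1 : ℝ) else 0)| ≤ 1 :=
    fun ω => by split_ifs <;> simp
  have hρaug := integral_add_sub_mul_comp_eq hS.aemeasurable
    (.of_bound (hiT.mul hiM).aestronglyMeasurable 1 (ae_of_all _ fun ω => by simpa using hiTM₁ ω))
    (.of_bound (hiT.mul (hρ.comp hS)).aestronglyMeasurable Cρ
      (ae_of_all _ fun ω => by simpa using hiTρ ω))
    hρmom (hν.div ((hπ.comp measurable_fst).mul hρ))
    (hπρc.mono fun _ h => abs_div_le_div_of_abs_le (mul_pos hc hc) (hCν _) h)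
  have hπaug := integral_add_sub_mul_comp_eq hS₁.aemeasurable
    (.of_bound hiT.aestronglyMeasurable 1 (ae_of_all _ fun ω => by simpa using hiT₁ ω))
    (.of_bound (hπ.comp hS₁).aestronglyMeasurable Cπ (ae_of_all _ fun ω => by simpa using hCπ _))
    hπmom (hμ.div hπ) (hπc.mono fun _ h => abs_div_le_div_of_abs_le hc (hCμ _) h)
  refine (integral_congr_ae ?_).trans ((hρaug _).trans (hπaug _))
  filter_upwards [hπc, hρc] with ω h₁ h₂
  exact doubly_robust_score_eq (hc.trans_le h₁).ne' (hc.trans_le h₂).ne' (hcons ω)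

theorem mediation_doubly_robust_representation_general
    {Ω : Type*} [MeasurableSpace Ω] [StandardBorelSpace Ω]
    (P : Measure Ω) [IsProbabilityMeasure P]
    (d₁ d₂ : ℕ)
    (S1 : Ω → (Fin d₁ → ℝ)) (hS1 : Measurable S1)
    (S2 : Ω → (Fin d₂ → ℝ)) (hS2 : Measurable S2)
    (T : Ω → ℝ) (hT : Measurable T)
    (Med : Ω → ℝ) (hMed : Measurable Med)
    (t : ℝ) (m : ℝ)
    (Ytm : Ω → ℝ) (hYtmm : Measurable Ytm) (hYtmb : ∃ C, ∀ ω, |Ytm ω| ≤ C)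
    (Y : Ω → ℝ)
    (hcons : ∀ ω, (if T ω = t then (1 : ℝ) else 0) * (if Med ω = m then (1 : ℝ) else 0) * Y ω
      = (if T ω = t then (1 : ℝ) else 0) * (if Med ω = m then (1 : ℝ) else 0) * Ytm ω)
    (κ : ℝ) (hκ : 0 < κ)
    (π0 : (Fin d₁ → ℝ) → ℝ) (ρ0 ν0 : (Fin d₁ → ℝ) × (Fin d₂ → ℝ) → ℝ)
    (μ0 : (Fin d₁ → ℝ) → ℝ)
    (hπ0m : Measurable π0) (hρ0m : Measurable ρ0) (hν0m : Measurable ν0) (hμ0m : Measurable μ0)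
    (hπ0b : ∃ C, ∀ x, |π0 x| ≤ C) (hρ0b : ∃ C, ∀ x, |ρ0 x| ≤ C)
    (hν0b : ∃ C, ∀ x, |ν0 x| ≤ C) (hμ0b : ∃ C, ∀ x, |μ0 x| ≤ C)
    (hπ0mom : ∀ h : (Fin d₁ → ℝ) → ℝ, Measurable h → (∃ C, ∀ x, |h x| ≤ C) →
      ∫ ω, (if T ω = t then (1 : ℝ) else 0) * h (S1 ω) ∂P
        = ∫ ω, π0 (S1 ω) * h (S1 ω) ∂P)
    (hρ0mom : ∀ h : (Fin d₁ → ℝ) × (Fin d₂ → ℝ) → ℝ, Measurable h → (∃ C, ∀ x, |h x| ≤ C) →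
      ∫ ω, (if T ω = t then (1 : ℝ) else 0) * (if Med ω = m then (1 : ℝ) else 0)
          * h (S1 ω, S2 ω) ∂P
        = ∫ ω, (if T ω = t then (1 : ℝ) else 0) * ρ0 (S1 ω, S2 ω) * h (S1 ω, S2 ω) ∂P)
    (hpos : ∀ᵐ ω ∂P, 1 / κ ≤ π0 (S1 ω) ∧ 1 / κ ≤ ρ0 (S1 ω, S2 ω))
    (hign1 : CondIndepFun (MeasurableSpace.comap S1 inferInstance) hS1.comap_le Ytm T P)
    (hign2 : CondIndepFun
      (MeasurableSpace.comap (fun ω => (S1 ω, S2 ω)) inferInstance)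
      (Measurable.comap_le (hS1.prodMk hS2))
      Ytm Med (P[|{ω | T ω = t}])) :
    ∫ ω, Ytm ω ∂P
      = ∫ ω, (μ0 (S1 ω)
          + (if T ω = t then (1 : ℝ) else 0) * (ν0 (S1 ω, S2 ω) - μ0 (S1 ω)) / π0 (S1 ω)
          + (if T ω = t then (1 : ℝ) else 0) * (if Med ω = m then (1 : ℝ) else 0)
            * (Y ω - ν0 (S1 ω, S2 ω)) / (π0 (S1 ω) * ρ0 (S1 ω, S2 ω))) ∂P := by
  obtain ⟨C, hC⟩ := hYtmb
  have hc : (0 : ℝ) < 1 / κ := by positivity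
  have hπc : ∀ᵐ ω ∂P, 1 / κ ≤ π0 (S1 ω) := hpos.mono fun _ h => h.1
  have hρc : ∀ᵐ ω ∂P, 1 / κ ≤ ρ0 (S1 ω, S2 ω) := hpos.mono fun _ h => h.2
  rw [integral_doubly_robust_score_eq hS1 hS2 hT hMed t m hcons hπ0m hρ0m hν0m hμ0m hπ0b hρ0b
    hν0b hμ0b hπ0mom hρ0mom hc hπc hρc]
  exact (integral_inverse_propensity_weighted_eq hS1 hS2 hT hMed t m hYtmm hC hπ0m hπ0b hρ0m hρ0b
    hπ0mom hρ0mom hc hπc hρc hign1 hign2).symm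

/-- Doubly robust representation of the counterfactual mean `E[Y(t,m)]` at
treatment level `t` and mediator level `m` in the causal mediation setup. -/
theorem mediation_doubly_robust_representation
    {Ω : Type*} [MeasurableSpace Ω] [StandardBorelSpace Ω] [Nonempty Ω]
    (P : Measure Ω) [IsProbabilityMeasure P]
    (d₁ d₂ : ℕ)
    (S1 : Ω → (Fin d₁ → ℝ)) (hS1 : Measurable S1)
    (S2 : Ω → (Fin d₂ → ℝ)) (hS2 : Measurable S2)
    (T : Ω → ℝ) (hT : Measurable T) (hT01 : ∀ ω, T ω = 0 ∨ T ω = 1)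
    (Med : Ω → ℝ) (hMed : Measurable Med)
    (Mset : Set ℝ) (hMsetc : Mset.Countable) (hMedmem : ∀ ω, Med ω ∈ Mset)
    (t : ℝ) (ht : t = 0 ∨ t = 1) (m : ℝ) (hm : m ∈ Mset)
    (Ytm : Ω → ℝ) (hYtmm : Measurable Ytm) (hYtmb : ∃ C, ∀ ω, |Ytm ω| ≤ C)
    (Y : Ω → ℝ) (hYm : Measurable Y)
    (hcons : ∀ ω, (if T ω = t then (1 : ℝ) else 0) * (if Med ω = m then (1 : ℝ) else 0) * Y ω
      = (if T ω = t then (1 : ℝ) else 0) * (if Med ω = m then (1 : ℝ) else 0) * Ytm ω)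
    (κ : ℝ) (hκ : 0 < κ)
    (π0 : (Fin d₁ → ℝ) → ℝ) (ρ0 ν0 : (Fin d₁ → ℝ) × (Fin d₂ → ℝ) → ℝ)
    (μ0 : (Fin d₁ → ℝ) → ℝ)
    (hπ0m : Measurable π0) (hρ0m : Measurable ρ0) (hν0m : Measurable ν0) (hμ0m : Measurable μ0)
    (hπ0b : ∃ C, ∀ x, |π0 x| ≤ C) (hρ0b : ∃ C, ∀ x, |ρ0 x| ≤ C)
    (hν0b : ∃ C, ∀ x, |ν0 x| ≤ C) (hμ0b : ∃ C, ∀ x, |μ0 x| ≤ C)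
    (hπ0mom : ∀ h : (Fin d₁ → ℝ) → ℝ, Measurable h → (∃ C, ∀ x, |h x| ≤ C) →
      ∫ ω, (if T ω = t then (1 : ℝ) else 0) * h (S1 ω) ∂P
        = ∫ ω, π0 (S1 ω) * h (S1 ω) ∂P)
    (hρ0mom : ∀ h : (Fin d₁ → ℝ) × (Fin d₂ → ℝ) → ℝ, Measurable h → (∃ C, ∀ x, |h x| ≤ C) →
      ∫ ω, (if T ω = t then (1 : ℝ) else 0) * (if Med ω = m then (1 : ℝ) else 0)
          * h (S1 ω, S2 ω) ∂P
        = ∫ ω, (if T ω = t then (1 : ℝ) else 0) * ρ0 (S1 ω, S2 ω) * h (S1 ω, S2 ω) ∂P)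
    (hν0mom : ∀ h : (Fin d₁ → ℝ) × (Fin d₂ → ℝ) → ℝ, Measurable h → (∃ C, ∀ x, |h x| ≤ C) →
      ∫ ω, (if T ω = t then (1 : ℝ) else 0) * (if Med ω = m then (1 : ℝ) else 0) * Ytm ω
          * h (S1 ω, S2 ω) ∂P
        = ∫ ω, (if T ω = t then (1 : ℝ) else 0) * (if Med ω = m then (1 : ℝ) else 0)
            * ν0 (S1 ω, S2 ω) * h (S1 ω, S2 ω) ∂P)
    (hμ0mom : ∀ h : (Fin d₁ → ℝ) → ℝ, Measurable h → (∃ C, ∀ x, |h x| ≤ C) →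
      ∫ ω, (if T ω = t then (1 : ℝ) else 0) * Ytm ω * h (S1 ω) ∂P
        = ∫ ω, (if T ω = t then (1 : ℝ) else 0) * μ0 (S1 ω) * h (S1 ω) ∂P)
    (hpos : ∀ᵐ ω ∂P, 1 / κ ≤ π0 (S1 ω) ∧ 1 / κ ≤ ρ0 (S1 ω, S2 ω))
    (hign1 : CondIndepFun (MeasurableSpace.comap S1 inferInstance) hS1.comap_le Ytm T P)
    (hign2 : CondIndepFun
      (MeasurableSpace.comap (fun ω => (S1 ω, S2 ω)) inferInstance)
      (Measurable.comap_le (hS1.prodMk hS2))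
      Ytm Med (P[|{ω | T ω = t}])) :
    ∫ ω, Ytm ω ∂P
      = ∫ ω, (μ0 (S1 ω)
          + (if T ω = t then (1 : ℝ) else 0) * (ν0 (S1 ω, S2 ω) - μ0 (S1 ω)) / π0 (S1 ω)
          + (if T ω = t then (1 : ℝ) else 0) * (if Med ω = m then (1 : ℝ) else 0)
            * (Y ω - ν0 (S1 ω, S2 ω)) / (π0 (S1 ω) * ρ0 (S1 ω, S2 ω))) ∂P :=
  mediation_doubly_robust_representation_general P d₁ d₂ S1 hS1 S2 hS2 T hT Med hMed t m Ytm hYtmm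
    hYtmb Y hcons κ hκ π0 ρ0 ν0 μ0 hπ0m hρ0m hν0m hμ0m hπ0b hρ0b hν0b hμ0b hπ0mom hρ0mom hpos hign1
    hign2
end

section
/- (Empirical risk comparison for nested regression, realized form of Lemma S.1.) Let n ≥ 1 and, for i = 1, …, n, let xᵢ ∈ 𝒳, rᵢ ∈ {0,1}, and yᵢ, dᵢ, eᵢ ∈ ℝ; set ŷᵢ := yᵢ + dᵢ + eᵢ. Let f̂, f̄, f⁰ : 𝒳 → ℝ be functions such that Σᵢ rᵢ·(ŷᵢ − f̂(xᵢ))² ≤ Σᵢ rᵢ·(ŷᵢ − f̄(xᵢ))² (f̂ has empirical squared-error risk no larger than f̄). Then (1/n)·Σᵢ rᵢ·(f̂(xᵢ) − f⁰(xᵢ))² ≤ (1/n)·Σᵢ rᵢ·(f⁰(xᵢ) − f̄(xᵢ))² + 2·( (1/n)·Σᵢ rᵢ·eᵢ² )^{1/2} · ( (1/n)·Σᵢ rᵢ·(f̂(xᵢ) − f̄(xᵢ))² )^{1/2} + (2/n)·Σᵢ rᵢ·(f̂(xᵢ) − f̄(xᵢ))·(yᵢ − f⁰(xᵢ) + dᵢ).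 -/
/-! Expanding the squares, the risk comparison bounds the empirical squared distance from `f̂` to
`f⁰` by that of `f̄` plus twice the cross term of `f̂ - f̄` with the residual
`ŷ - f⁰ = (y - f⁰ + d) + e`. The second-order part `e` of that cross term is bounded by the
Cauchy–Schwarz inequality for the nonnegative weights `rᵢ`. -/

open Finset

section WeightedLeastSquares

variable {ι : Type*} (s : Finset ι) (w : ι → ℝ)

theorem Real.sum_mul_mul_le_sqrt_mul_sqrt (hw : ∀ i ∈ s, 0 ≤ w i) (f g : ι → ℝ) :
    ∑ i ∈ s, w i * f i * g i ≤
      √(∑ i ∈ s, w i * f i ^ 2) * √(∑ i ∈ s, w i * g i ^ 2) := by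
  have hsq : (∑ i ∈ s, w i * f i * g i) ^ 2 ≤
      (∑ i ∈ s, w i * f i ^ 2) * ∑ i ∈ s, w i * g i ^ 2 :=
    sum_sq_le_sum_mul_sum_of_sq_le_mul s
      (fun i hi => mul_nonneg (hw i hi) (sq_nonneg _))
      (fun i hi => mul_nonneg (hw i hi) (sq_nonneg _))
      (fun i _ => le_of_eq (by ring))
  rw [← Real.sqrt_mul (sum_nonneg fun i hi => mul_nonneg (hw i hi) (sq_nonneg _))]
  exact (le_abs_self _).trans (Real.abs_le_sqrt hsq)

theorem sum_mul_sub_sq_le_of_sum_mul_sub_sq_le (a b c z : ι → ℝ)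
    (hrisk : ∑ i ∈ s, w i * (z i - a i) ^ 2 ≤ ∑ i ∈ s, w i * (z i - b i) ^ 2) :
    ∑ i ∈ s, w i * (a i - c i) ^ 2 ≤
      ∑ i ∈ s, w i * (c i - b i) ^ 2 + 2 * ∑ i ∈ s, w i * (a i - b i) * (z i - c i) := by
  have hexpand : ∑ i ∈ s, w i * (a i - c i) ^ 2 =
      ∑ i ∈ s, w i * (z i - a i) ^ 2 - ∑ i ∈ s, w i * (z i - b i) ^ 2
        + ∑ i ∈ s, w i * (c i - b i) ^ 2 + 2 * ∑ i ∈ s, w i * (a i - b i) * (z i - c i) := by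
    rw [mul_sum, ← sum_sub_distrib, ← sum_add_distrib, ← sum_add_distrib]
    exact sum_congr rfl fun i _ => by ring
  linarith

theorem sum_mul_sub_sq_le_of_sum_mul_sub_sq_le_of_eq_add (hw : ∀ i ∈ s, 0 ≤ w i)
    (a b c z u e : ι → ℝ) (hz : ∀ i ∈ s, z i = c i + u i + e i)
    (hrisk : ∑ i ∈ s, w i * (z i - a i) ^ 2 ≤ ∑ i ∈ s, w i * (z i - b i) ^ 2) :
    ∑ i ∈ s, w i * (a i - c i) ^ 2 ≤
      ∑ i ∈ s, w i * (c i - b i) ^ 2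
        + 2 * (√(∑ i ∈ s, w i * e i ^ 2) * √(∑ i ∈ s, w i * (a i - b i) ^ 2))
        + 2 * ∑ i ∈ s, w i * (a i - b i) * u i := by
  have hsplit : ∑ i ∈ s, w i * (a i - b i) * (z i - c i) =
      ∑ i ∈ s, w i * e i * (a i - b i) + ∑ i ∈ s, w i * (a i - b i) * u i := by
    rw [← sum_add_distrib]
    exact sum_congr rfl fun i hi => by rw [hz i hi]; ring
  have hcs := Real.sum_mul_mul_le_sqrt_mul_sqrt s w hw e (a - b)
  simp only [Pi.sub_apply] at hcs
  linarith [sum_mul_sub_sq_le_of_sum_mul_sub_sq_le s w a b c z hrisk]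

end WeightedLeastSquares

theorem empirical_risk_comparison_nested_regression_general
    {𝒳 : Type*} (n : ℕ)
    (x : Fin n → 𝒳) (r : Fin n → ℝ) (hr : ∀ i, r i = 0 ∨ r i = 1)
    (y d e yh : Fin n → ℝ) (hyh : ∀ i, yh i = y i + d i + e i)
    (fhat fbar f0 : 𝒳 → ℝ)
    (herm : ∑ i, r i * (yh i - fhat (x i)) ^ 2 ≤ ∑ i, r i * (yh i - fbar (x i)) ^ 2) :
    (1 / (n : ℝ)) * ∑ i, r i * (fhat (x i) - f0 (x i)) ^ 2
      ≤ (1 / (n : ℝ)) * ∑ i, r i * (f0 (x i) - fbar (x i)) ^ 2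
        + 2 * Real.sqrt ((1 / (n : ℝ)) * ∑ i, r i * (e i) ^ 2)
            * Real.sqrt ((1 / (n : ℝ)) * ∑ i, r i * (fhat (x i) - fbar (x i)) ^ 2)
        + (2 / (n : ℝ)) * ∑ i, r i * (fhat (x i) - fbar (x i)) * (y i - f0 (x i) + d i) := by
  have hr_nonneg : ∀ i ∈ univ, 0 ≤ r i := fun i _ => by
    rcases hr i with h | h <;> simp [h]
  have key := sum_mul_sub_sq_le_of_sum_mul_sub_sq_le_of_eq_add univ r hr_nonneg
    (fhat ∘ x) (fbar ∘ x) (f0 ∘ x) yh (fun i => y i - f0 (x i) + d i) e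
    (fun i _ => by rw [hyh i]; simp only [Function.comp_apply]; ring) herm
  simp only [Function.comp_apply] at key
  have hinv : (0 : ℝ) ≤ 1 / n := by positivity
  calc _ ≤ 1 / n * (∑ i, r i * (f0 (x i) - fbar (x i)) ^ 2
          + 2 * (√(∑ i, r i * e i ^ 2) * √(∑ i, r i * (fhat (x i) - fbar (x i)) ^ 2))
          + 2 * ∑ i, r i * (fhat (x i) - fbar (x i)) * (y i - f0 (x i) + d i)) :=
        mul_le_mul_of_nonneg_left key hinv
    _ = _ := by
      rw [Real.sqrt_mul hinv, Real.sqrt_mul hinv]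
      linear_combination (-2 * √(∑ i, r i * e i ^ 2) *
        √(∑ i, r i * (fhat (x i) - fbar (x i)) ^ 2)) * Real.mul_self_sqrt hinv

/-- Empirical risk comparison for nested regression (realized form of the
basic oracle inequality): if `f̂` has empirical squared-error risk no larger than `f̄` on the
estimated pseudo-outcomes `yhᵢ = yᵢ + dᵢ + eᵢ`, then the empirical squared distance of `f̂` to
`f⁰` is controlled as stated. -/
theorem empirical_risk_comparison_nested_regression
    {𝒳 : Type*} (n : ℕ) (hn : 1 ≤ n)
    (x : Fin n → 𝒳) (r : Fin n → ℝ) (hr : ∀ i, r i = 0 ∨ r i = 1)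
    (y d e yh : Fin n → ℝ) (hyh : ∀ i, yh i = y i + d i + e i)
    (fhat fbar f0 : 𝒳 → ℝ)
    (herm : ∑ i, r i * (yh i - fhat (x i)) ^ 2 ≤ ∑ i, r i * (yh i - fbar (x i)) ^ 2) :
    (1 / (n : ℝ)) * ∑ i, r i * (fhat (x i) - f0 (x i)) ^ 2
      ≤ (1 / (n : ℝ)) * ∑ i, r i * (f0 (x i) - fbar (x i)) ^ 2
        + 2 * Real.sqrt ((1 / (n : ℝ)) * ∑ i, r i * (e i) ^ 2)
            * Real.sqrt ((1 / (n : ℝ)) * ∑ i, r i * (fhat (x i) - fbar (x i)) ^ 2)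
        + (2 / (n : ℝ)) * ∑ i, r i * (fhat (x i) - fbar (x i)) * (y i - f0 (x i) + d i) :=
  empirical_risk_comparison_nested_regression_general n x r hr y d e yh hyh fhat fbar f0 herm
end

section
/- (Population oracle inequality, second part of Lemma S.1 in realized form.) Let (Ω, 𝔉, P) be a probability space carrying bounded measurable random variables X : Ω → 𝒳 (a measurable space), R : Ω → {0,1}, and Y^#, Δ₁, Δ₂ : Ω → ℝ. Let f⁰ : 𝒳 → ℝ be a bounded measurable function such that E[R·(Y^# − f⁰(X))·h(X)] = 0 and E[R·Δ₁·h(X)] = 0 for every bounded measurable h : 𝒳 → ℝ. Let n ≥ 1 and let (x₁, r₁, y₁, d₁, e₁), …, (xₙ, rₙ, yₙ, dₙ, eₙ) be arbitrary points of 𝒳 × {0,1} × ℝ³ with ŷᵢ := yᵢ + dᵢ + eᵢ, and let f̂, f̄ : 𝒳 → ℝ be bounded measurable functions with Σᵢ rᵢ·(ŷᵢ − f̂(xᵢ))² ≤ Σᵢ rᵢ·(ŷᵢ − f̄(xᵢ))². Writing E_n[·] for the average (1/n)Σᵢ over the sample points, the following holds: E[R·(f̂(X) − f⁰(X))²] ≤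 E[R·(f⁰(X) − f̄(X))²] + W₁ + W₂, where W₁ := E_n[ rᵢ·(f̂(xᵢ) − f̄(xᵢ))·(2yᵢ − f̂(xᵢ) − f̄(xᵢ) + 2dᵢ) ] − E[ R·(f̂(X) − f̄(X))·(2Y^# − f̂(X) − f̄(X) + 2Δ₁) ] and W₂ := 2·( E_n[rᵢ·eᵢ²] )^{1/2} · ( E_n[rᵢ·(f̂(xᵢ) − f̄(xᵢ))²] )^{1/2}. -/
open MeasureTheory Finset

/-! The excess risk `∫ R (f̂ - f⁰)² - ∫ R (f⁰ - f̄)²` equals minus the population loss difference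
`∫ R (f̂ - f̄)(2Y^# - f̂ - f̄ + 2Δ₁)`: expanding the squares around `f⁰`, the cross terms are the
two orthogonality integrals tested against `h = f̂ - f̄`. On the sample side, `f̂` minimises the
empirical loss, so the empirical loss difference plus the cross term `2 Σ rᵢ eᵢ (f̂ - f̄)(xᵢ)` is
nonnegative, and Cauchy–Schwarz bounds that cross term by `W₂`. Adding the two facts gives the
inequality. -/

theorem Real.sum_weight_mul_mul_le_sqrt_mul_sqrt {ι : Type*} (s : Finset ι) {w : ι → ℝ}
    (hw : ∀ i ∈ s, 0 ≤ w i) (f g : ι → ℝ) :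
    ∑ i ∈ s, w i * f i * g i ≤ √(∑ i ∈ s, w i * f i ^ 2) * √(∑ i ∈ s, w i * g i ^ 2) := by
  have hsq : ∀ i ∈ s, ∀ h : ι → ℝ, (√(w i) * h i) ^ 2 = w i * h i ^ 2 := fun i hi h => by
    rw [mul_pow, Real.sq_sqrt (hw i hi)]
  have hcs := Real.sum_mul_le_sqrt_mul_sqrt s (fun i => √(w i) * f i) (fun i => √(w i) * g i)
  rw [sum_congr rfl fun i hi => hsq i hi f, sum_congr rfl fun i hi => hsq i hi g] at hcs
  rwa [sum_congr rfl fun i hi => show √(w i) * f i * (√(w i) * g i) = w i * f i * g i by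
    linear_combination f i * g i * Real.mul_self_sqrt (hw i hi)] at hcs

theorem exists_abs_sub_le {α : Type*} {f g : α → ℝ} (hf : ∃ C, ∀ a, |f a| ≤ C)
    (hg : ∃ C, ∀ a, |g a| ≤ C) : ∃ C, ∀ a, |f a - g a| ≤ C :=
  let ⟨C, hC⟩ := hf
  let ⟨D, hD⟩ := hg
  ⟨C + D, fun a => (abs_sub _ _).trans (add_le_add (hC a) (hD a))⟩

namespace MeasureTheory

variable {α : Type*} [MeasurableSpace α] {μ : Measure α}

theorem memLp_top_of_abs_le {f : α → ℝ} (hf : Measurable f) (hb : ∃ C, ∀ a, |f a| ≤ C) :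
    MemLp f ⊤ μ :=
  let ⟨C, hC⟩ := hb
  memLp_top_of_bound hf.aestronglyMeasurable C (ae_of_all _ hC)

theorem MemLp.mul_top {f g : α → ℝ} (hf : MemLp f ⊤ μ) (hg : MemLp g ⊤ μ) :
    MemLp (fun a => f a * g a) ⊤ μ :=
  hg.mul' hf

theorem MemLp.pow_top {f : α → ℝ} (hf : MemLp f ⊤ μ) (k : ℕ) :
    MemLp (fun a => f a ^ k) ⊤ μ := by
  induction k with
  | zero => simpa using memLp_top_const (μ := μ) (1 : ℝ)
  | succ k ih => simpa only [pow_succ] using ih.mul_top hf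

end MeasureTheory

theorem integral_loss_diff_eq_of_orthogonal {Ω : Type*} [MeasurableSpace Ω] {μ : Measure Ω}
    {R Y D g a b : Ω → ℝ}
    (hYg : Integrable (fun ω => R ω * (Y ω - g ω) * (a ω - b ω)) μ)
    (hD : Integrable (fun ω => R ω * D ω * (a ω - b ω)) μ)
    (hgb : Integrable (fun ω => R ω * (g ω - b ω) ^ 2) μ)
    (hag : Integrable (fun ω => R ω * (a ω - g ω) ^ 2) μ)
    (horth : ∫ ω, R ω * (Y ω - g ω) * (a ω - b ω) ∂μ = 0)
    (horth1 : ∫ ω, R ω * D ω * (a ω - b ω) ∂μ = 0) :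
    ∫ ω, R ω * (a ω - b ω) * (2 * Y ω - a ω - b ω + 2 * D ω) ∂μ
      = (∫ ω, R ω * (g ω - b ω) ^ 2 ∂μ) - ∫ ω, R ω * (a ω - g ω) ^ 2 ∂μ := calc
  _ = ∫ ω, 2 * (R ω * (Y ω - g ω) * (a ω - b ω)) + 2 * (R ω * D ω * (a ω - b ω))
        + (R ω * (g ω - b ω) ^ 2 - R ω * (a ω - g ω) ^ 2) ∂μ :=
      integral_congr_ae (ae_of_all _ fun ω => by ring)
  _ = _ := by
      rw [integral_add (by exact (hYg.const_mul 2).add (hD.const_mul 2)) (by exact hgb.sub hag),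
        integral_add (hYg.const_mul 2) (hD.const_mul 2), integral_sub hgb hag,
        integral_const_mul, integral_const_mul, horth, horth1]
      ring

theorem mul_sum_loss_diff_add_two_sqrt_mul_sqrt_nonneg {ι : Type*} [Fintype ι]
    {w y d e a b : ι → ℝ} (hw : ∀ i, 0 ≤ w i)
    (hmin : ∑ i, w i * (y i + d i + e i - a i) ^ 2 ≤ ∑ i, w i * (y i + d i + e i - b i) ^ 2)
    {c : ℝ} (hc : 0 ≤ c) :
    0 ≤ c * ∑ i, w i * (a i - b i) * (2 * y i - a i - b i + 2 * d i)
      + 2 * √(c * ∑ i, w i * e i ^ 2) * √(c * ∑ i, w i * (a i - b i) ^ 2) := by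
  have hexpand : ∑ i, w i * (y i + d i + e i - b i) ^ 2 - ∑ i, w i * (y i + d i + e i - a i) ^ 2
      = ∑ i, w i * (a i - b i) * (2 * y i - a i - b i + 2 * d i)
        + 2 * ∑ i, w i * e i * (a i - b i) := by
    rw [← sum_sub_distrib, mul_sum, ← sum_add_distrib]
    exact sum_congr rfl fun i _ => by ring
  have hcs := Real.sum_weight_mul_mul_le_sqrt_mul_sqrt univ (fun i _ => hw i) e (fun i => a i - b i)
  have hscale : ∀ A B : ℝ, √(c * A) * √(c * B) = c * (√A * √B) := fun A B => by
    rw [Real.sqrt_mul hc, Real.sqrt_mul hc]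
    linear_combination (√A * √B) * Real.mul_self_sqrt hc
  rw [mul_assoc 2, hscale, mul_left_comm, ← mul_add]
  exact mul_nonneg hc (by linarith)

theorem population_oracle_inequality_nested_regression_general
    {𝒳 : Type*} [MeasurableSpace 𝒳]
    {Ω : Type*} [MeasurableSpace Ω] (P : Measure Ω) [IsProbabilityMeasure P]
    (X : Ω → 𝒳) (hX : Measurable X)
    (R : Ω → ℝ) (hR : Measurable R) (hR01 : ∀ ω, R ω = 0 ∨ R ω = 1)
    (Ysharp Δ1 : Ω → ℝ)
    (hYsharpm : Measurable Ysharp) (hΔ1m : Measurable Δ1)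
    (hYsharpb : ∃ C, ∀ ω, |Ysharp ω| ≤ C) (hΔ1b : ∃ C, ∀ ω, |Δ1 ω| ≤ C)
    (f0 : 𝒳 → ℝ) (hf0m : Measurable f0) (hf0b : ∃ C, ∀ x, |f0 x| ≤ C)
    (horth : ∀ h : 𝒳 → ℝ, Measurable h → (∃ C, ∀ x, |h x| ≤ C) →
      ∫ ω, R ω * (Ysharp ω - f0 (X ω)) * h (X ω) ∂P = 0)
    (horth1 : ∀ h : 𝒳 → ℝ, Measurable h → (∃ C, ∀ x, |h x| ≤ C) →
      ∫ ω, R ω * Δ1 ω * h (X ω) ∂P = 0)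
    (n : ℕ)
    (x : Fin n → 𝒳) (r : Fin n → ℝ) (hr : ∀ i, r i = 0 ∨ r i = 1)
    (y d e yh : Fin n → ℝ) (hyh : ∀ i, yh i = y i + d i + e i)
    (fhat fbar : 𝒳 → ℝ) (hfhatm : Measurable fhat) (hfbarm : Measurable fbar)
    (hfhatb : ∃ C, ∀ x, |fhat x| ≤ C) (hfbarb : ∃ C, ∀ x, |fbar x| ≤ C)
    (herm : ∑ i, r i * (yh i - fhat (x i)) ^ 2 ≤ ∑ i, r i * (yh i - fbar (x i)) ^ 2) :
    ∫ ω, R ω * (fhat (X ω) - f0 (X ω)) ^ 2 ∂P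
      ≤ (∫ ω, R ω * (f0 (X ω) - fbar (X ω)) ^ 2 ∂P)
        + ((1 / (n : ℝ)) * ∑ i, r i * (fhat (x i) - fbar (x i))
              * (2 * y i - fhat (x i) - fbar (x i) + 2 * d i)
          - ∫ ω, R ω * (fhat (X ω) - fbar (X ω))
              * (2 * Ysharp ω - fhat (X ω) - fbar (X ω) + 2 * Δ1 ω) ∂P)
        + 2 * Real.sqrt ((1 / (n : ℝ)) * ∑ i, r i * (e i) ^ 2)
            * Real.sqrt ((1 / (n : ℝ)) * ∑ i, r i * (fhat (x i) - fbar (x i)) ^ 2) := by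
  have memLp_comp_X : ∀ f : 𝒳 → ℝ, Measurable f → (∃ C, ∀ x, |f x| ≤ C) →
      MemLp (fun ω => f (X ω)) ⊤ P := fun f hf hb =>
    memLp_top_of_abs_le (hf.comp hX) (hb.imp fun C hC ω => hC (X ω))
  have mR : MemLp R ⊤ P :=
    memLp_top_of_abs_le hR ⟨1, fun ω => by rcases hR01 ω with h | h <;> simp [h]⟩
  have mY := memLp_top_of_abs_le (μ := P) hYsharpm hYsharpb
  have mΔ1 := memLp_top_of_abs_le (μ := P) hΔ1m hΔ1b
  have mf0 := memLp_comp_X f0 hf0m hf0b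
  have mfhat := memLp_comp_X fhat hfhatm hfhatb
  have mfbar := memLp_comp_X fbar hfbarm hfbarb
  have hpop := integral_loss_diff_eq_of_orthogonal
    (((mR.mul_top (mY.sub mf0)).mul_top (mfhat.sub mfbar)).integrable le_top)
    (((mR.mul_top mΔ1).mul_top (mfhat.sub mfbar)).integrable le_top)
    ((mR.mul_top ((mf0.sub mfbar).pow_top 2)).integrable le_top)
    ((mR.mul_top ((mfhat.sub mf0).pow_top 2)).integrable le_top)
    (horth _ (hfhatm.sub hfbarm) (exists_abs_sub_le hfhatb hfbarb))
    (horth1 _ (hfhatm.sub hfbarm) (exists_abs_sub_le hfhatb hfbarb))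
  obtain rfl : yh = fun i => y i + d i + e i := funext hyh
  have hr_nonneg : ∀ i, 0 ≤ r i := fun i => by rcases hr i with h | h <;> simp [h]
  have hemp := mul_sum_loss_diff_add_two_sqrt_mul_sqrt_nonneg hr_nonneg herm
    (by positivity : (0 : ℝ) ≤ 1 / n)
  linarith

/-- Population oracle inequality for nested regression (realized form):
under the orthogonality conditions `E[R·(Y^# − f⁰(X))·h(X)] = 0` and `E[R·Δ₁·h(X)] = 0`, the
population squared error of the empirical risk minimizer `f̂` is bounded by the population
squared error of any comparison function `f̄` plus an empirical-process term `W₁` and a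
second-order term `W₂`. -/
theorem population_oracle_inequality_nested_regression
    {𝒳 : Type*} [MeasurableSpace 𝒳]
    {Ω : Type*} [MeasurableSpace Ω] (P : Measure Ω) [IsProbabilityMeasure P]
    (X : Ω → 𝒳) (hX : Measurable X)
    (R : Ω → ℝ) (hR : Measurable R) (hR01 : ∀ ω, R ω = 0 ∨ R ω = 1)
    (Ysharp Δ1 Δ2 : Ω → ℝ)
    (hYsharpm : Measurable Ysharp) (hΔ1m : Measurable Δ1) (hΔ2m : Measurable Δ2)
    (hYsharpb : ∃ C, ∀ ω, |Ysharp ω| ≤ C) (hΔ1b : ∃ C, ∀ ω, |Δ1 ω| ≤ C)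
    (hΔ2b : ∃ C, ∀ ω, |Δ2 ω| ≤ C)
    (f0 : 𝒳 → ℝ) (hf0m : Measurable f0) (hf0b : ∃ C, ∀ x, |f0 x| ≤ C)
    (horth : ∀ h : 𝒳 → ℝ, Measurable h → (∃ C, ∀ x, |h x| ≤ C) →
      ∫ ω, R ω * (Ysharp ω - f0 (X ω)) * h (X ω) ∂P = 0)
    (horth1 : ∀ h : 𝒳 → ℝ, Measurable h → (∃ C, ∀ x, |h x| ≤ C) →
      ∫ ω, R ω * Δ1 ω * h (X ω) ∂P = 0)
    (n : ℕ) (hn : 1 ≤ n)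
    (x : Fin n → 𝒳) (r : Fin n → ℝ) (hr : ∀ i, r i = 0 ∨ r i = 1)
    (y d e yh : Fin n → ℝ) (hyh : ∀ i, yh i = y i + d i + e i)
    (fhat fbar : 𝒳 → ℝ) (hfhatm : Measurable fhat) (hfbarm : Measurable fbar)
    (hfhatb : ∃ C, ∀ x, |fhat x| ≤ C) (hfbarb : ∃ C, ∀ x, |fbar x| ≤ C)
    (herm : ∑ i, r i * (yh i - fhat (x i)) ^ 2 ≤ ∑ i, r i * (yh i - fbar (x i)) ^ 2) :
    ∫ ω, R ω * (fhat (X ω) - f0 (X ω)) ^ 2 ∂P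
      ≤ (∫ ω, R ω * (f0 (X ω) - fbar (X ω)) ^ 2 ∂P)
        + ((1 / (n : ℝ)) * ∑ i, r i * (fhat (x i) - fbar (x i))
              * (2 * y i - fhat (x i) - fbar (x i) + 2 * d i)
          - ∫ ω, R ω * (fhat (X ω) - fbar (X ω))
              * (2 * Ysharp ω - fhat (X ω) - fbar (X ω) + 2 * Δ1 ω) ∂P)
        + 2 * Real.sqrt ((1 / (n : ℝ)) * ∑ i, r i * (e i) ^ 2)
            * Real.sqrt ((1 / (n : ℝ)) * ∑ i, r i * (fhat (x i) - fbar (x i)) ^ 2) :=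
  population_oracle_inequality_nested_regression_general P X hX R hR hR01 Ysharp Δ1 hYsharpm hΔ1m
    hYsharpb hΔ1b f0 hf0m hf0b horth horth1 n x r hr y d e yh hyh fhat fbar hfhatm hfbarm hfhatb
    hfbarb herm
end
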